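/- Let A = k[[t^a, t^{a+1}]], q = a−1, s = aℓ + (ℓ−1) with ℓ ≥ 2 and a ≥ ℓ+3. Set Q = (t^s), I = Q : 𝔪^{a−1}. Then (t^{aℓ+ℓ})^{a−ℓ} ∈ Q but (t^{aℓ+ℓ})^{a−ℓ} ∉ Q I^{(a−ℓ)−1}; hence Q ∩ I^{a−ℓ} ≠ Q I^{a−ℓ−1}, the associated graded ring G(I) is not Cohen–Macaulay, and r_Q(I) = a − ℓ. -/

import Mathlib

set_option maxHeartbeats 1000000
set_option synthInstance.maxHeartbeats 1000000

open PowerSeries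

/-- The numerical semigroup ring `k[[H]]`: power series supported on `H`. -/
noncomputable def ssr (k : Type) [Field k] (H : AddSubmonoid ℕ) :
    Subalgebra k (PowerSeries k) where
  carrier := {f | ∀ n : ℕ, n ∉ H → PowerSeries.coeff n f = 0}
  mul_mem' := by
    intro f g hf hg n hn
    rw [Set.mem_setOf_eq] at hf hg
    rw [PowerSeries.coeff_mul]
    apply Finset.sum_eq_zero
    rintro ⟨i, j⟩ hij
    rw [Finset.HasAntidiagonal.mem_antidiagonal] at hij
    by_cases hi : i ∈ H
    · have hj : j ∉ H := fun hj => hn (hij ▸ H.add_mem hi hj)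
      rw [hg j hj, mul_zero]
    · rw [hf i hi, zero_mul]
  add_mem' := by
    intro f g hf hg n hn
    rw [Set.mem_setOf_eq] at hf hg
    rw [map_add, hf n hn, hg n hn, add_zero]
  one_mem' := by
    intro n hn
    have h0 : n ≠ 0 := fun h => hn (by rw [h]; exact H.zero_mem)
    simp [PowerSeries.coeff_one, h0]
  zero_mem' := by
    intro n _
    simp
  algebraMap_mem' := by
    intro r n hn
    have h0 : n ≠ 0 := fun h => hn (by rw [h]; exact H.zero_mem)
    simp [PowerSeries.algebraMap_apply, PowerSeries.coeff_C, h0]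

/-- The monomial `t^n` as an element of `k[[H]]`, for `n ∈ H`. -/
noncomputable def tp (k : Type) [Field k] (H : AddSubmonoid ℕ) (n : ℕ) (hn : n ∈ H) :
    ssr k H :=
  ⟨PowerSeries.X ^ n, by
    intro m hm
    rw [PowerSeries.coeff_X_pow]
    exact if_neg (fun h => hm (by rw [h]; exact hn))⟩

/-- The maximal ideal of `k[[H]]`, generated by the monomials `t^n`, `0 < n ∈ H`. -/
noncomputable def mIdeal (k : Type) [Field k] (H : AddSubmonoid ℕ) : Ideal (ssr k H) :=
  Ideal.span {x | ∃ n : ℕ, ∃ hn : n ∈ H, 0 < n ∧ x = tp k H n hn}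

/-!
All ideals in sight are spanned by monomials, so the theorem is about the semigroup
`H = ⟨a, a + 1⟩ = {a u + v | v ≤ u}`, whose conductor is `a (a - 1)` and which misses
`a i - 1` for `0 < i < a`. These gaps show that `I = Q : 𝔪^(a-1)` is spanned by the monomials
`t^e`, `e ∈ E = H ∩ [s, ∞)`; hence `I^n` and `Q I^n` are spanned by the monomials of the sumsets
`n E` and `s + n E`, and `t^N ∈ Q I^n` forces `N ∈ s + n E + H`.

As `s` and `s + 1` are the only elements of `E` below `a (ℓ + 1)`, no element of `s + n E + H`
lies in `((n + 1) s + n, (n + 1) s + (a - ℓ)]`, which contains `(n + 1)(s + 1)` when `n < a - ℓ`;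
so `(t^(s+1))^(n+1) ∉ Q I^n`, while `(a - ℓ)(s + 1) - s` is beyond the conductor. Finally
`(a - ℓ + 1) E = s + (a - ℓ) E`: in the coordinates `a U + V`, sums of `n` elements of `E` are
cut out by linear inequalities (`FeasiblePair`), and a case analysis on `V` splits off one
summand `s = a ℓ + (ℓ - 1)`.
-/

open scoped Pointwise

-- `n • S` is the `n`-fold sumset `S + ⋯ + S` (and `0 • S = {0}`), not a dilation of `S`

lemma nsmul_subset_Ici {S : Set ℕ} {m : ℕ} (h : S ⊆ Set.Ici m) (n : ℕ) :
    n • S ⊆ Set.Ici (n * m) := by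
  induction n with
  | zero => simp [← Set.singleton_zero]
  | succ n ih =>
    rw [succ_nsmul]
    rintro _ ⟨x, hx, y, hy, rfl⟩
    have := ih hx
    have := h hy
    simp only [Set.mem_Ici] at *
    rw [add_one_mul]
    omega

lemma mul_add_mem_nsmul_pair {a n j : ℕ} (hj : j ≤ n) : a * n + j ∈ n • ({a, a + 1} : Set ℕ) := by
  induction n generalizing j with
  | zero => simp [← Set.singleton_zero, Nat.le_zero.1 hj]
  | succ n ih =>
    rw [succ_nsmul]
    rcases Nat.lt_or_ge j (n + 1) with h | h
    · exact ⟨a * n + j, ih (by omega), a, .inl rfl, by ring⟩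
    · exact ⟨a * n + n, ih le_rfl, a + 1, .inr rfl, by rw [Nat.le_antisymm hj h]; ring⟩

lemma nsmul_subset_addSubmonoid {H : AddSubmonoid ℕ} {S : Set ℕ} (hS : S ⊆ H) (n : ℕ) :
    n • S ⊆ H := by
  induction n with
  | zero => simp [← Set.singleton_zero, H.zero_mem]
  | succ n ih =>
    rw [succ_nsmul]
    rintro _ ⟨x, hx, y, hy, rfl⟩
    exact H.add_mem (ih hx) (hS hy)


section MonomialIdeals

variable {k : Type} [Field k] {H : AddSubmonoid ℕ}

@[simp] lemma coe_tp {n : ℕ} (hn : n ∈ H) : (tp k H n hn : PowerSeries k) = X ^ n := rfl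

lemma tp_add {m n : ℕ} (hm : m ∈ H) (hn : n ∈ H) :
    tp k H (m + n) (H.add_mem hm hn) = tp k H m hm * tp k H n hn :=
  Subtype.ext (pow_add X m n)

lemma tp_zero : tp k H 0 H.zero_mem = 1 := Subtype.ext (pow_zero X)

lemma tp_pow {n : ℕ} (hn : n ∈ H) (j : ℕ) :
    tp k H n hn ^ j = tp k H (j * n) (by simpa using H.nsmul_mem hn j) :=
  Subtype.ext (by simp [pow_mul, mul_comm])

lemma tp_mem_span_tp {m n d : ℕ} (hm : m ∈ H) (hn : n ∈ H) (hd : d ∈ H) (h : n = m + d) :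
    tp k H n hn ∈ Ideal.span {tp k H m hm} := by
  subst h
  exact Ideal.mem_span_singleton'.2 ⟨tp k H d hd, by rw [mul_comm, ← tp_add]⟩

variable (k H) in
noncomputable def monomialSpan (S : Set ℕ) : Ideal (ssr k H) :=
  Ideal.span {x | ∃ n, ∃ hn : n ∈ H, n ∈ S ∧ x = tp k H n hn}

variable {S T : Set ℕ}

lemma tp_mem_monomialSpan {n : ℕ} (hn : n ∈ H) (hnS : n ∈ S) :
    tp k H n hn ∈ monomialSpan k H S :=
  Ideal.subset_span ⟨n, hn, hnS, rfl⟩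

lemma monomialSpan_le {J : Ideal (ssr k H)}
    (h : ∀ n (hn : n ∈ H), n ∈ S → tp k H n hn ∈ J) : monomialSpan k H S ≤ J :=
  Ideal.span_le.2 (by rintro _ ⟨n, hn, hnS, rfl⟩; exact h n hn hnS)

lemma monomialSpan_mono (h : S ⊆ T) : monomialSpan k H S ≤ monomialSpan k H T :=
  monomialSpan_le fun _ hn hnS => tp_mem_monomialSpan hn (h hnS)

lemma monomialSpan_singleton {n : ℕ} (hn : n ∈ H) :
    monomialSpan k H {n} = Ideal.span {tp k H n hn} :=
  le_antisymm (monomialSpan_le fun _ _ h => by subst h; exact Ideal.subset_span rfl)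
    (Ideal.span_le.2 <| Set.singleton_subset_iff.2 <| tp_mem_monomialSpan hn rfl)

lemma monomialSpan_pair {m n : ℕ} (hm : m ∈ H) (hn : n ∈ H) :
    monomialSpan k H {m, n} = Ideal.span {tp k H m hm, tp k H n hn} := by
  refine le_antisymm (monomialSpan_le fun _ _ h => ?_) (Ideal.span_le.2 ?_)
  · rcases h with rfl | rfl
    exacts [Ideal.subset_span (.inl rfl), Ideal.subset_span (.inr rfl)]
  · rintro _ (rfl | rfl)
    exacts [tp_mem_monomialSpan hm (.inl rfl), tp_mem_monomialSpan hn (.inr rfl)]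

lemma monomialSpan_add (hS : S ⊆ H) (hT : T ⊆ H) :
    monomialSpan k H (S + T) = monomialSpan k H S * monomialSpan k H T := by
  refine le_antisymm (monomialSpan_le ?_) ?_
  · rintro _ _ ⟨m, hmS, n, hnT, rfl⟩
    rw [tp_add (hS hmS) (hT hnT)]
    exact Ideal.mul_mem_mul (tp_mem_monomialSpan _ hmS) (tp_mem_monomialSpan _ hnT)
  · rw [monomialSpan, monomialSpan, Ideal.span_mul_span', Ideal.span_le]
    rintro _ ⟨_, ⟨m, hm, hmS, rfl⟩, _, ⟨n, hn, hnT, rfl⟩, rfl⟩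
    dsimp only
    rw [← tp_add]
    exact tp_mem_monomialSpan _ (Set.add_mem_add hmS hnT)

lemma monomialSpan_nsmul (hS : S ⊆ H) (n : ℕ) :
    monomialSpan k H (n • S) = monomialSpan k H S ^ n := by
  induction n with
  | zero =>
    rw [zero_nsmul, ← Set.singleton_zero, monomialSpan_singleton H.zero_mem, tp_zero,
      Ideal.span_singleton_one, pow_zero, Ideal.one_eq_top]
  | succ n ih =>
    rw [succ_nsmul, monomialSpan_add (nsmul_subset_addSubmonoid hS n) hS, ih, pow_succ]

lemma span_pair_tp_pow {m n : ℕ} (hm : m ∈ H) (hn : n ∈ H) (j : ℕ) :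
    Ideal.span {tp k H m hm, tp k H n hn} ^ j = monomialSpan k H (j • {m, n}) := by
  rw [← monomialSpan_pair, monomialSpan_nsmul]
  rintro _ (rfl | rfl) <;> assumption

lemma span_tp_mul_monomialSpan_pow {s : ℕ} (hs : s ∈ H) (hS : S ⊆ H) (n : ℕ) :
    Ideal.span {tp k H s hs} * monomialSpan k H S ^ n = monomialSpan k H ({s} + n • S) := by
  rw [← monomialSpan_nsmul hS, ← monomialSpan_singleton hs,
    monomialSpan_add (Set.singleton_subset_iff.2 hs) (nsmul_subset_addSubmonoid hS n)]

lemma mem_add_of_coeff_ne_zero {f : ssr k H} (hf : f ∈ monomialSpan k H S) {n : ℕ}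
    (hn : coeff n (f : PowerSeries k) ≠ 0) : n ∈ S + H := by
  induction hf using Submodule.span_induction generalizing n with
  | mem x hx =>
    obtain ⟨m, hm, hmS, rfl⟩ := hx
    rw [coe_tp, coeff_X_pow] at hn
    obtain rfl : n = m := by simpa using hn
    exact ⟨n, hmS, 0, H.zero_mem, add_zero n⟩
  | zero => simp at hn
  | add x y _ _ hx hy =>
    by_cases hxn : coeff n (x : PowerSeries k) = 0
    · exact hy (by simpa [hxn] using hn)
    · exact hx hxn
  | smul r x _ hx =>
    rw [smul_eq_mul, Subalgebra.coe_mul, coeff_mul] at hn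
    obtain ⟨⟨i, j⟩, hij, hne⟩ := Finset.exists_ne_zero_of_sum_ne_zero hn
    rw [Finset.HasAntidiagonal.mem_antidiagonal] at hij
    obtain ⟨m, hmS, h, hh, rfl⟩ := hx (right_ne_zero_of_mul hne)
    have hi : i ∈ H := by_contra fun hi => left_ne_zero_of_mul hne (r.2 i hi)
    exact ⟨m, hmS, i + h, H.add_mem hi hh, by dsimp only at hij ⊢; omega⟩

lemma mem_add_of_tp_mem {n : ℕ} {hn : n ∈ H} (h : tp k H n hn ∈ monomialSpan k H S) :
    n ∈ S + H :=
  mem_add_of_coeff_ne_zero h (by simp)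

lemma mem_monomialSpan_of_support_subset {f : ssr k H}
    (hS : ∀ n, coeff n (f : PowerSeries k) ≠ 0 → n ∈ S) {N : ℕ} (hN : ∀ n, N ≤ n → coeff n (f : PowerSeries k) = 0) : f ∈ monomialSpan k H S := by
  induction N generalizing f with
  | zero =>
    obtain rfl : f = 0 := Subtype.ext (PowerSeries.ext fun n => by simpa using hN n n.zero_le)
    exact Ideal.zero_mem _
  | succ N ih =>
    set c := coeff N (f : PowerSeries k)
    by_cases hc : c = 0
    · exact ih hS fun n hn => (eq_or_lt_of_le hn).elim (· ▸ hc) (hN n)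
    have hNH : N ∈ H := by_contra fun h => hc (f.2 N h)
    have hcoeff : ∀ n, coeff n ((f - c • tp k H N hNH : ssr k H) : PowerSeries k) =
        if n = N then 0 else coeff n (f : PowerSeries k) := by
      intro n
      split_ifs with h <;> simp [coeff_X_pow, h, c]
    rw [← sub_add_cancel f (c • tp k H N hNH)]
    refine Ideal.add_mem _ (ih (fun n hn => ?_) fun n hn => ?_)
      (Submodule.smul_of_tower_mem _ c (tp_mem_monomialSpan hNH (hS N hc)))
    · rw [hcoeff] at hn
      split_ifs at hn
      exacts [(hn rfl).elim, hS n hn]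
    · rw [hcoeff]
      split_ifs with h
      · rfl
      · exact hN n (by omega)

lemma mem_monomialSpan_inter_Ici {s c : ℕ} (hs : s ∈ H) (hc : ∀ n, c ≤ n → n ∈ H) {f : ssr k H}
    (hf : ∀ n < s, coeff n (f : PowerSeries k) = 0) :
    f ∈ monomialSpan k H (↑H ∩ Set.Ici s) := by
  classical
  -- `f - t^s g` is a polynomial, supported in `[s, s + c)`
  let g : ssr k H := ⟨mk fun m => if c ≤ m then coeff (m + s) (f : PowerSeries k) else 0,
    fun m hm => by rw [coeff_mk, if_neg fun h => hm (hc m h)]⟩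
  have hcoeff (n : ℕ) : coeff n ((f - tp k H s hs * g : ssr k H) : PowerSeries k) =
      coeff n (f : PowerSeries k) -
        if s + c ≤ n then coeff n (f : PowerSeries k) else 0 := by
    simp only [Subalgebra.coe_sub, Subalgebra.coe_mul, coe_tp, map_sub, coeff_X_pow_mul', g,
      coeff_mk]
    congr 1
    by_cases h : s + c ≤ n
    · rw [if_pos (by omega), if_pos (by omega), if_pos h, Nat.sub_add_cancel (by omega)]
    · rw [if_neg h]
      split_ifs <;> first | rfl | omega
  rw [← sub_add_cancel f (tp k H s hs * g)]
  refine Ideal.add_mem _ (mem_monomialSpan_of_support_subset (N := s + c)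
    (fun n hn => ⟨?_, ?_⟩) fun n hn => ?_)
    (Ideal.mul_mem_right _ _ (tp_mem_monomialSpan hs ⟨hs, Set.mem_Ici.2 le_rfl⟩))
  · exact by_contra fun h => hn ((f - tp k H s hs * g).2 n h)
  · by_contra h
    rw [Set.mem_Ici, not_le] at h
    rw [hcoeff, hf n h, if_neg (by omega), sub_zero] at hn
    exact hn rfl
  · rw [hcoeff, if_pos hn, sub_self]

end MonomialIdeals

abbrev consecutiveSemigroup (a : ℕ) : AddSubmonoid ℕ := AddSubmonoid.closure {a, a + 1}

namespace consecutiveSemigroup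

variable {a n : ℕ}

lemma mem_iff : n ∈ consecutiveSemigroup a ↔ ∃ u v, v ≤ u ∧ n = a * u + v := by
  rw [AddSubmonoid.mem_closure_pair]
  constructor
  · rintro ⟨x, y, rfl⟩
    exact ⟨x + y, y, by omega, by simp only [smul_eq_mul]; ring⟩
  · rintro ⟨u, v, hvu, rfl⟩
    obtain ⟨w, rfl⟩ := Nat.exists_eq_add_of_le hvu
    exact ⟨w, v, by simp only [smul_eq_mul]; ring⟩

lemma mul_add_mem {u v : ℕ} (h : v ≤ u) : a * u + v ∈ consecutiveSemigroup a :=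
  mem_iff.2 ⟨u, v, h, rfl⟩

lemma exists_eq_mul_add (ha : 0 < a) (hn : n ∈ consecutiveSemigroup a) :
    ∃ u v, v ≤ u ∧ v < a ∧ n = a * u + v := by
  obtain ⟨u, v, hvu, rfl⟩ := mem_iff.1 hn
  have := Nat.div_add_mod v a
  refine ⟨u + v / a, v % a, ((Nat.mod_le v a).trans hvu).trans (Nat.le_add_right _ _),
    Nat.mod_lt v ha, ?_⟩
  rw [mul_add]
  omega

lemma le_of_mem (hn : n ∈ consecutiveSemigroup a) (h0 : n ≠ 0) : a ≤ n := by
  obtain ⟨u, v, hvu, rfl⟩ := mem_iff.1 hn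
  rcases u with _ | u
  · omega
  · nlinarith

lemma le_mul_add_of_lt {u : ℕ} (hn : n ∈ consecutiveSemigroup a) (h : n < a * (u + 1)) :
    n ≤ a * u + u := by
  obtain ⟨u', v, hvu, rfl⟩ := mem_iff.1 hn
  rcases le_or_gt u' u with hu | hu <;> nlinarith

lemma mem_of_le (h : a * (a - 1) ≤ n) : n ∈ consecutiveSemigroup a := by
  rcases Nat.eq_zero_or_pos a with rfl | ha
  · exact mem_iff.2 ⟨n, n, le_rfl, by simp⟩
  have := Nat.div_add_mod n a
  have := Nat.mod_lt n ha
  have : a - 1 ≤ n / a := (Nat.le_div_iff_mul_le ha).2 (by rw [mul_comm]; exact h)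
  exact mem_iff.2 ⟨n / a, n % a, by omega, (Nat.div_add_mod n a).symm⟩

lemma mul_sub_one_notMem {i : ℕ} (hi : 1 ≤ i) (hia : i < a) :
    a * i - 1 ∉ consecutiveSemigroup a := by
  intro hmem
  obtain ⟨u, v, hvu, hva, hv⟩ := exists_eq_mul_add (by omega) hmem
  have hai : a ≤ a * i := Nat.le_mul_of_pos_right a hi
  have hui : u + 1 = i := by
    rcases lt_trichotomy (u + 1) i with h | h | h
    · have : a * (u + 2) ≤ a * i := Nat.mul_le_mul_left a h
      rw [mul_add] at this
      omega
    · exact h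
    · have : a * i ≤ a * u := Nat.mul_le_mul_left a (by omega)
      omega
  subst hui
  rw [mul_add, mul_one] at hv
  omega

end consecutiveSemigroup

section ColonIdeal

variable {k : Type} [Field k] {a s : ℕ}

lemma monomialSpan_le_colon (haH : a ∈ consecutiveSemigroup a)
    (ha1H : a + 1 ∈ consecutiveSemigroup a) (hs : s ∈ consecutiveSemigroup a) :
    monomialSpan k (consecutiveSemigroup a) (↑(consecutiveSemigroup a) ∩ Set.Ici s) ≤
      (Ideal.span {tp k _ s hs}).colon
        ↑(Ideal.span {tp k _ a haH, tp k _ (a + 1) ha1H} ^ (a - 1)) := by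
  refine monomialSpan_le fun n hn hns => Submodule.mem_colon.2 fun p hp => ?_
  rw [SetLike.mem_coe, span_pair_tp_pow] at hp
  have hsub : (a - 1) • ({a, a + 1} : Set ℕ) ⊆ consecutiveSemigroup a :=
    nsmul_subset_addSubmonoid (by rintro _ (rfl | rfl) <;> assumption) _
  have hnp : tp k _ n hn * p ∈ monomialSpan k _ ({n} + (a - 1) • {a, a + 1}) := by
    rw [monomialSpan_add (Set.singleton_subset_iff.2 hn) hsub]
    exact Ideal.mul_mem_mul (tp_mem_monomialSpan hn rfl) hp
  refine monomialSpan_le (fun _ _ hm => ?_) hnp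
  obtain ⟨n', hn', m, hm, rfl⟩ := hm
  subst n'
  have hma : a * (a - 1) ≤ m :=
    mul_comm a (a - 1) ▸ nsmul_subset_Ici (by rintro _ (rfl | rfl) <;> simp) _ hm
  have hsn : s ≤ n := hns.2
  exact tp_mem_span_tp hs _ (consecutiveSemigroup.mem_of_le (n := n + m - s) (by omega))
    (show n + m = s + (n + m - s) by omega)

lemma coeff_eq_zero_of_mem_colon (ha : 0 < a) (hsa : s ≤ a * (a - 1))
    (haH : a ∈ consecutiveSemigroup a) (ha1H : a + 1 ∈ consecutiveSemigroup a)
    (hs : s ∈ consecutiveSemigroup a) {f : ssr k (consecutiveSemigroup a)}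
    (hf : f ∈ (Ideal.span {tp k _ s hs}).colon
      ↑(Ideal.span {tp k _ a haH, tp k _ (a + 1) ha1H} ^ (a - 1)))
    {n : ℕ} (hn : n < s) : coeff n (f : PowerSeries k) = 0 := by
  by_contra hne
  -- multiply by `t^(a(a-1) + j)` with `j ≤ a - 1` chosen so that the exponent of the
  -- corresponding monomial of the quotient by `t^s` is a gap `a i - 1` of the semigroup
  obtain ⟨d, r, hdr, hra⟩ : ∃ d r, n + a * (a - 1) - s = a * d + r ∧ r < a :=
    ⟨_, _, (Nat.div_add_mod _ a).symm, Nat.mod_lt _ ha⟩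
  have hda : d + 1 < a := by
    by_contra! h
    have : a * (a - 1) ≤ a * d := Nat.mul_le_mul_left a (by omega)
    omega
  obtain ⟨j, hj⟩ : ∃ j, j = a - 1 - r := ⟨_, rfl⟩
  have hja : j ≤ a - 1 := by omega
  have hmem : tp k _ (a * (a - 1) + j) (consecutiveSemigroup.mul_add_mem hja) ∈
      Ideal.span {tp k _ a haH, tp k _ (a + 1) ha1H} ^ (a - 1) := by
    rw [span_pair_tp_pow]
    exact tp_mem_monomialSpan _ (mul_add_mem_nsmul_pair hja)
  have hQ := Submodule.mem_colon.1 hf _ hmem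
  rw [← monomialSpan_singleton hs] at hQ
  obtain ⟨s', hs', h, hh, hsum⟩ := mem_add_of_coeff_ne_zero hQ (n := n + (a * (a - 1) + j))
    (by rwa [smul_eq_mul, Subalgebra.coe_mul, coe_tp, coeff_mul_X_pow])
  rw [Set.mem_singleton_iff] at hs'
  subst s'
  dsimp only at hsum
  refine consecutiveSemigroup.mul_sub_one_notMem (i := d + 1) (by omega) hda ?_
  have hgap : a * (d + 1) - 1 = h := by rw [mul_add]; omega
  exact hgap ▸ hh

lemma colon_eq_monomialSpan (ha : 0 < a) (hsa : s ≤ a * (a - 1))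
    (haH : a ∈ consecutiveSemigroup a) (ha1H : a + 1 ∈ consecutiveSemigroup a)
    (hs : s ∈ consecutiveSemigroup a) :
    (Ideal.span {tp k _ s hs}).colon ↑(Ideal.span {tp k _ a haH, tp k _ (a + 1) ha1H} ^ (a - 1)) =
      monomialSpan k (consecutiveSemigroup a) (↑(consecutiveSemigroup a) ∩ Set.Ici s) :=
  le_antisymm
    (fun _ hf => mem_monomialSpan_inter_Ici hs (fun _ => consecutiveSemigroup.mem_of_le)
      fun _ => coeff_eq_zero_of_mem_colon ha hsa haH ha1H hs hf)
    (monomialSpan_le_colon haH ha1H hs)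

end ColonIdeal

section Sumsets

variable {a ℓ s : ℕ}

lemma le_of_mem_nsmul_add (hℓ : 1 ≤ ℓ) (hℓa : ℓ ≤ a) (hs : s + 1 = a * ℓ + ℓ) {n m : ℕ}
    (hm : m ∈ n • (↑(consecutiveSemigroup a) ∩ Set.Ici s) + ↑(consecutiveSemigroup a))
    (hle : m ≤ n * s + (a - ℓ)) : m ≤ n * s + n := by
  induction n generalizing m with
  | zero =>
    rw [zero_nsmul, zero_add] at hm
    by_contra h
    have := consecutiveSemigroup.le_of_mem hm (by omega)
    omega
  | succ n ih =>
    rw [succ_nsmul, add_right_comm] at hm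
    obtain ⟨y, ⟨z, hz, h, hh, rfl⟩, e, ⟨heH, hse⟩, rfl⟩ := hm
    have hsz : n * s ≤ z := nsmul_subset_Ici Set.inter_subset_right n hz
    simp only [Set.mem_Ici] at hse
    dsimp only at hle ⊢
    rw [add_one_mul] at hle ⊢
    have he : e ≤ a * ℓ + ℓ :=
      consecutiveSemigroup.le_mul_add_of_lt heH (by rw [mul_add_one]; omega)
    have := ih (Set.add_mem_add hz hh) (by omega)
    omega

lemma notMem_singleton_add_nsmul_add (hℓ : 1 ≤ ℓ) (hs : s + 1 = a * ℓ + ℓ) {n : ℕ}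
    (hn : n + 1 ≤ a - ℓ) :
    (n + 1) * (s + 1) ∉
      {s} + n • (↑(consecutiveSemigroup a) ∩ Set.Ici s) + ↑(consecutiveSemigroup a) := by
  rintro ⟨_, ⟨s', hs', y, hy, rfl⟩, h, hh, hsum⟩
  rw [Set.mem_singleton_iff] at hs'
  subst s'
  have := le_of_mem_nsmul_add hℓ (by omega) hs (Set.add_mem_add hy hh) (by
    dsimp only at hsum
    rw [add_one_mul, mul_add_one] at hsum
    omega)
  dsimp only at hsum
  rw [add_one_mul, mul_add_one] at hsum
  omega

/-- `(U, V)` are the coordinates `a * U + V` of a sum of `n` elements `a * u + v` of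
`⟨a, a + 1⟩ ∩ [s, ∞)` with `v ≤ u` and `v ≤ a - 1`. Such an element has `u > ℓ`, or `u = ℓ` and
`v ≥ ℓ - 1`; hence at least `n (ℓ + 1) - U` (truncated) summands contribute `v ≥ ℓ - 1`. -/
structure FeasiblePair (a ℓ n U V : ℕ) : Prop where
  mul_le : n * ℓ ≤ U
  le_fst : V ≤ U
  le_mul : V ≤ n * (a - 1)
  deficit : (ℓ - 1) * (n * (ℓ + 1) - U) ≤ V

namespace FeasiblePair

variable {n m U V U' V' : ℕ}

lemma mul_le_snd (h : FeasiblePair a ℓ n U V) {T : ℕ} (hT : U + T ≤ n * (ℓ + 1)) :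
    (ℓ - 1) * T ≤ V :=
  (Nat.mul_le_mul_left _ (by omega)).trans h.deficit

lemma of_mul_succ_le (hU : n * (ℓ + 1) ≤ U) (hVU : V ≤ U) (hV : V ≤ n * (a - 1)) :
    FeasiblePair a ℓ n U V :=
  ⟨(Nat.mul_le_mul_left n (Nat.le_succ ℓ)).trans hU, hVU, hV, by simp [Nat.sub_eq_zero_of_le hU]⟩

lemma add (h : FeasiblePair a ℓ n U V) (h' : FeasiblePair a ℓ m U' V') :
    FeasiblePair a ℓ (n + m) (U + U') (V + V') := by
  have e₁ : (n + m) * ℓ = n * ℓ + m * ℓ := add_mul _ _ _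
  have e₂ : (n + m) * (a - 1) = n * (a - 1) + m * (a - 1) := add_mul _ _ _
  have e₃ : (n + m) * (ℓ + 1) = n * (ℓ + 1) + m * (ℓ + 1) := add_mul _ _ _
  refine ⟨by linarith [h.mul_le, h'.mul_le], by linarith [h.le_fst, h'.le_fst],
    by linarith [h.le_mul, h'.le_mul], ?_⟩
  calc (ℓ - 1) * ((n + m) * (ℓ + 1) - (U + U'))
      ≤ (ℓ - 1) * ((n * (ℓ + 1) - U) + (m * (ℓ + 1) - U')) := Nat.mul_le_mul_left _ (by omega)
    _ ≤ V + V' := by rw [mul_add]; exact add_le_add h.deficit h'.deficit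

lemma exists_of_mem (ha : 0 < a) (hℓ : 1 ≤ ℓ) (hs : s + 1 = a * ℓ + ℓ) {g : ℕ}
    (hg : g ∈ ↑(consecutiveSemigroup a) ∩ Set.Ici s) :
    ∃ u v, g = a * u + v ∧ FeasiblePair a ℓ 1 u v := by
  obtain ⟨hgH, hsg⟩ := hg
  simp only [Set.mem_Ici] at hsg
  obtain ⟨u, v, hvu, hva, rfl⟩ := consecutiveSemigroup.exists_eq_mul_add ha hgH
  have hℓu : ℓ ≤ u := by
    by_contra! h
    have : a * (u + 1) ≤ a * ℓ := Nat.mul_le_mul_left a h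
    rw [mul_add_one] at this
    omega
  refine ⟨u, v, rfl, ⟨by omega, hvu, by omega, ?_⟩⟩
  obtain rfl | h : u = ℓ ∨ ℓ + 1 ≤ u := by omega
  · rw [one_mul, show u + 1 - u = 1 by omega, mul_one]
    omega
  · rw [show 1 * (ℓ + 1) - u = 0 by omega, mul_zero]
    exact Nat.zero_le v

lemma mem_of_one (hℓa : ℓ ≤ a) (hs : s + 1 = a * ℓ + ℓ) {u v : ℕ}
    (h : FeasiblePair a ℓ 1 u v) : a * u + v ∈ ↑(consecutiveSemigroup a) ∩ Set.Ici s := by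
  refine ⟨consecutiveSemigroup.mul_add_mem h.le_fst, ?_⟩
  have hℓu : ℓ ≤ u := by simpa using h.mul_le
  rcases hℓu.eq_or_lt with rfl | hu
  · have := h.mul_le_snd (T := 1) (by omega)
    simp only [Set.mem_Ici]
    omega
  · have : a * (ℓ + 1) ≤ a * u := Nat.mul_le_mul_left a hu
    simp only [Set.mem_Ici]
    rw [mul_add_one] at this
    omega

lemma exists_of_mem_nsmul (ha : 0 < a) (hℓ : 1 ≤ ℓ) (hs : s + 1 = a * ℓ + ℓ) {n m : ℕ}
    (hm : m ∈ n • (↑(consecutiveSemigroup a) ∩ Set.Ici s)) :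
    ∃ U V, m = a * U + V ∧ FeasiblePair a ℓ n U V := by
  induction n generalizing m with
  | zero =>
    rw [zero_nsmul, ← Set.singleton_zero, Set.mem_singleton_iff] at hm
    exact ⟨0, 0, by simp [hm], by constructor <;> simp⟩
  | succ n ih =>
    rw [succ_nsmul] at hm
    obtain ⟨y, hy, g, hg, rfl⟩ := hm
    obtain ⟨U, V, rfl, hUV⟩ := ih hy
    obtain ⟨u, v, rfl, huv⟩ := exists_of_mem ha hℓ hs hg
    exact ⟨U + u, V + v, by ring, hUV.add huv⟩

lemma exists_split_of_eq (haℓ : ℓ + 2 ≤ a) {c : ℕ}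
    (h : FeasiblePair a ℓ (c + 1) ((c + 1) * ℓ) V) :
    ∃ V₂ v, V = V₂ + v ∧ FeasiblePair a ℓ c (c * ℓ) V₂ ∧ FeasiblePair a ℓ 1 ℓ v := by
  -- every summand has `u = ℓ`, hence `v ≥ ℓ - 1`
  have hV : (ℓ - 1) * c + (ℓ - 1) ≤ V := by
    have := h.mul_le_snd (T := c + 1) (by rw [add_one_mul, add_one_mul, mul_add_one]; omega)
    rwa [mul_add_one] at this
  have h₂ := h.le_fst
  rw [add_one_mul] at h₂
  have hcℓ : (ℓ - 1) * c ≤ c * ℓ := by rw [mul_comm]; exact Nat.mul_le_mul_left c (Nat.sub_le ℓ 1)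
  have hca : c * ℓ ≤ c * (a - 1) := Nat.mul_le_mul_left c (by omega)
  obtain ⟨v, hv⟩ : ∃ v, v = max (ℓ - 1) (V - c * ℓ) := ⟨_, rfl⟩
  refine ⟨V - v, v, by omega, ⟨le_rfl, by omega, by omega, ?_⟩, ⟨by omega, by omega, by omega, ?_⟩⟩
  · rw [show c * (ℓ + 1) - c * ℓ = c by rw [mul_add_one]; omega]
    omega
  · rw [one_mul, show ℓ + 1 - ℓ = 1 by omega, mul_one]
    omega

lemma exists_split (haℓ : ℓ + 2 ≤ a) {c : ℕ} (h : FeasiblePair a ℓ (c + 1) U V) :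
    ∃ U₂ V₂ u v, U = U₂ + u ∧ V = V₂ + v ∧
      FeasiblePair a ℓ c U₂ V₂ ∧ FeasiblePair a ℓ 1 u v := by
  rcases lt_or_eq_of_le h.mul_le with hB | rfl
  swap
  · obtain ⟨V₂, v, rfl, h₂, h₁⟩ := h.exists_split_of_eq haℓ
    exact ⟨c * ℓ, V₂, ℓ, v, add_one_mul c ℓ, rfl, h₂, h₁⟩
  obtain ⟨h₁, h₂, h₃, h₄⟩ := h
  have e₁ : (c + 1) * ℓ = c * ℓ + ℓ := add_one_mul c ℓ
  have e₂ : (c + 1) * (a - 1) = c * (a - 1) + (a - 1) := add_one_mul c (a - 1)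
  have e₃ : (c + 1) * (ℓ + 1) = c * ℓ + c + ℓ + 1 := by ring
  have e₄ : c * (ℓ + 1) = c * ℓ + c := mul_add_one c ℓ
  have hca : c * (ℓ + 1) ≤ c * (a - 1) := Nat.mul_le_mul_left c (by omega)
  have hcℓ : (ℓ - 1) * c ≤ c * ℓ := by rw [mul_comm]; exact Nat.mul_le_mul_left c (Nat.sub_le ℓ 1)
  rcases le_or_gt ((c + 1) * (ℓ + 1)) U with hA | hA
  · -- no summand needs `u = ℓ`: give the last one `u = min (U - c (ℓ + 1)) (a - 1)`
    set u := min (U - c * (ℓ + 1)) (a - 1)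
    set V₂ := min V (min (U - u) (c * (a - 1)))
    exact ⟨U - u, V₂, u, V - V₂, by omega, by omega, .of_mul_succ_le (by omega) (by omega)
      (by omega), .of_mul_succ_le (by omega) (by omega) (by omega)⟩
  · -- the last summand gets `u = ℓ + 1`
    refine ⟨U - (ℓ + 1), min V (U - (ℓ + 1)), ℓ + 1, V - min V (U - (ℓ + 1)), by omega, by omega,
      ⟨by omega, by omega, by omega, le_min ?_ ?_⟩, .of_mul_succ_le (by omega) (by omega)
      (by omega)⟩
    · exact (Nat.mul_le_mul_left _ (by omega)).trans h₄
    · exact (Nat.mul_le_mul_left _ (by omega)).trans (hcℓ.trans (by omega))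

lemma mem_nsmul (hℓa : ℓ + 2 ≤ a) (hs : s + 1 = a * ℓ + ℓ) {n : ℕ}
    (h : FeasiblePair a ℓ (n + 1) U V) :
    a * U + V ∈ (n + 1) • (↑(consecutiveSemigroup a) ∩ Set.Ici s) := by
  induction n generalizing U V with
  | zero =>
    rw [zero_add, one_nsmul]
    exact mem_of_one (by omega) hs h
  | succ n ih =>
    obtain ⟨U₂, V₂, u, v, rfl, rfl, h₂, h₁⟩ := h.exists_split hℓa
    rw [succ_nsmul]
    exact ⟨_, ih h₂, _, mem_of_one (by omega) hs h₁, by ring⟩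

variable {q : ℕ}

lemma exists_sub_of_add_two_le (hq : 1 ≤ q) (ha : a = ℓ + q) (hs : s + 1 = a * ℓ + ℓ)
    (h : FeasiblePair a ℓ (q + 1) U V) (hV : V + 2 ≤ ℓ) :
    ∃ U' V', a * U' + V' + s = a * U + V ∧ FeasiblePair a ℓ q U' V' := by
  have e : (q + 1) * (ℓ + 1) = q * (ℓ + 1) + (ℓ + 1) := add_one_mul q (ℓ + 1)
  have hU : (q + 1) * (ℓ + 1) ≤ U := by
    by_contra! hU
    have := h.mul_le_snd (T := 1) (by omega)
    omega
  obtain ⟨U', rfl⟩ : ∃ U', U = U' + (ℓ + 1) := ⟨U - (ℓ + 1), by omega⟩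
  have hqℓ : ℓ ≤ q * ℓ := Nat.le_mul_of_pos_left ℓ hq
  have e' : q * (ℓ + 1) = q * ℓ + q := mul_add_one q ℓ
  have hqa : a - 1 ≤ q * (a - 1) := Nat.le_mul_of_pos_left _ hq
  -- a summand with `u ≥ ℓ + 1` gives up `a (ℓ + 1) = s + (q + 1)`
  refine ⟨U', V + q + 1, ?_, .of_mul_succ_le (by omega) (by omega) (by omega)⟩
  rw [mul_add, mul_add_one]
  omega

lemma exists_sub_of_lt (hℓ : 1 ≤ ℓ) (ha : a = ℓ + q) (hs : s + 1 = a * ℓ + ℓ)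
    (h : FeasiblePair a ℓ (q + 1) U V) (hV : ℓ ≤ V + 1) (hVU : V < U)
    (hVq : V ≤ q * (a - 1) + (ℓ - 1)) :
    ∃ U' V', a * U' + V' + s = a * U + V ∧ FeasiblePair a ℓ q U' V' := by
  have e₁ : (q + 1) * ℓ = q * ℓ + ℓ := add_one_mul q ℓ
  have e₂ : (q + 1) * (ℓ + 1) = q * (ℓ + 1) + (ℓ + 1) := add_one_mul q (ℓ + 1)
  have := h.mul_le
  obtain ⟨U', rfl⟩ : ∃ U', U = U' + ℓ := ⟨U - ℓ, by omega⟩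
  obtain ⟨V', rfl⟩ : ∃ V', V = V' + (ℓ - 1) := ⟨V - (ℓ - 1), by omega⟩
  refine ⟨U', V', by rw [mul_add]; omega, ⟨by omega, by omega, by omega, ?_⟩⟩
  rcases le_or_gt U' (q * (ℓ + 1)) with hU | hU
  · have := h.mul_le_snd (T := q * (ℓ + 1) - U' + 1) (by omega)
    rw [mul_add_one] at this
    omega
  · simp [Nat.sub_eq_zero_of_le hU.le]

lemma exists_sub_of_le (hℓ : 1 ≤ ℓ) (hq : 1 ≤ q) (ha : a = ℓ + q) (hs : s + 1 = a * ℓ + ℓ)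
    (h : FeasiblePair a ℓ (q + 1) U V) (hV : ℓ ≤ V + 1) (hUV : U ≤ V ∨ q * (a - 1) + ℓ ≤ V) :
    ∃ U' V', a * U' + V' + s = a * U + V ∧ FeasiblePair a ℓ q U' V' := by
  have e₁ : (q + 1) * ℓ = q * ℓ + ℓ := add_one_mul q ℓ
  have e₂ : (q + 1) * (a - 1) = q * (a - 1) + (a - 1) := add_one_mul q (a - 1)
  have e₃ : q * (ℓ + 1) = q * ℓ + q := mul_add_one q ℓ
  have hqa : a - 1 ≤ q * (a - 1) := Nat.le_mul_of_pos_left _ hq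
  have hqℓ : q + ℓ ≤ q * ℓ + 1 := by nlinarith
  have := h.mul_le
  have := h.le_fst
  have := h.le_mul
  obtain ⟨U', rfl⟩ : ∃ U', U = U' + (ℓ - 1) := ⟨U - (ℓ - 1), by omega⟩
  obtain ⟨V', rfl⟩ : ∃ V', V = V' + (ℓ - 1) + a := ⟨V - (ℓ - 1) - a, by omega⟩
  have haℓ : a * (ℓ - 1) + a = a * ℓ := by rw [← mul_add_one, Nat.sub_add_cancel hℓ]
  -- `s = a (ℓ - 1) + (a + ℓ - 1)`, with a second coordinate beyond `a`
  refine ⟨U', V', by rw [mul_add]; omega, ⟨by omega, by omega, by omega, ?_⟩⟩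
  -- the deficit of the remaining `q` summands is at most `q - 1`
  obtain ⟨T, hT⟩ : ∃ T, T = q * (ℓ + 1) - U' := ⟨_, rfl⟩
  have hTq : T + 1 ≤ q := by omega
  rw [← hT]
  rcases hUV with hUV | hUV
  · have h₁ : ℓ * (T + 1) ≤ ℓ * q := Nat.mul_le_mul_left ℓ hTq
    have h₂ : (ℓ - 1) * T + T = ℓ * T := by
      rw [Nat.sub_one_mul, Nat.sub_add_cancel (Nat.le_mul_of_pos_left T hℓ)]
    rw [mul_add_one, mul_comm ℓ q] at h₁
    rcases Nat.eq_zero_or_pos T with rfl | hT0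
    · simp
    · omega
  · have h₁ : (ℓ - 1) * T ≤ (a - 1) * (q - 1) := Nat.mul_le_mul (by omega) (by omega)
    have h₂ : (a - 1) * (q - 1) + (a - 1) = q * (a - 1) := by
      rw [← mul_add_one, Nat.sub_add_cancel hq, mul_comm]
    omega

lemma exists_sub (hℓ : 1 ≤ ℓ) (hq : 1 ≤ q) (ha : a = ℓ + q) (hs : s + 1 = a * ℓ + ℓ)
    (h : FeasiblePair a ℓ (q + 1) U V) :
    ∃ U' V', a * U' + V' + s = a * U + V ∧ FeasiblePair a ℓ q U' V' := by
  by_cases hV : V + 2 ≤ ℓ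
  · exact h.exists_sub_of_add_two_le hq ha hs hV
  by_cases hII : V < U ∧ V ≤ q * (a - 1) + (ℓ - 1)
  · exact h.exists_sub_of_lt hℓ ha hs (by omega) hII.1 hII.2
  · exact h.exists_sub_of_le hℓ hq ha hs (by omega) (by have := h.le_fst; omega)

end FeasiblePair

lemma succ_nsmul_subset_singleton_add (hℓ : 1 ≤ ℓ) (hℓa : ℓ + 2 ≤ a) (hs : s + 1 = a * ℓ + ℓ) :
    (a - ℓ + 1) • (↑(consecutiveSemigroup a) ∩ Set.Ici s) ⊆
      {s} + (a - ℓ) • (↑(consecutiveSemigroup a) ∩ Set.Ici s) := by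
  intro m hm
  obtain ⟨U, V, rfl, h⟩ := FeasiblePair.exists_of_mem_nsmul (by omega) hℓ hs hm
  obtain ⟨U', V', heq, h'⟩ := h.exists_sub hℓ (by omega) (by omega) hs
  obtain ⟨n, hn⟩ : ∃ n, a - ℓ = n + 1 := ⟨a - ℓ - 1, by omega⟩
  rw [hn] at h' ⊢
  exact ⟨s, rfl, _, h'.mem_nsmul hℓa hs, by dsimp only; omega⟩

lemma add_mul_pred_le (hℓ : 2 ≤ ℓ) (hℓa : ℓ + 3 ≤ a) (hs : s + 1 = a * ℓ + ℓ) :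
    s + a * (a - 1) ≤ (a - ℓ) * (s + 1) := by
  obtain ⟨l, rfl⟩ : ∃ l, ℓ = l + 2 := ⟨ℓ - 2, by omega⟩
  obtain ⟨q, rfl⟩ : ∃ q, a = l + 5 + q := ⟨a - l - 5, by omega⟩
  suffices s + 1 + (l + 5 + q) * (l + 4 + q) ≤ (q + 3) * (s + 1) by
    rw [show l + 5 + q - (l + 2) = q + 3 by omega, show l + 5 + q - 1 = l + 4 + q by omega]
    omega
  rw [hs]
  ring_nf
  nlinarith

end Sumsets

lemma monomialSpan_pow_succ_eq {k : Type} [Field k] {a ℓ s : ℕ} (hℓ : 1 ≤ ℓ) (hℓa : ℓ + 2 ≤ a)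
    (hs1 : s + 1 = a * ℓ + ℓ) (hs : s ∈ consecutiveSemigroup a) :
    monomialSpan k _ (↑(consecutiveSemigroup a) ∩ Set.Ici s) ^ (a - ℓ + 1) =
      Ideal.span {tp k _ s hs} *
        monomialSpan k _ (↑(consecutiveSemigroup a) ∩ Set.Ici s) ^ (a - ℓ) := by
  rw [span_tp_mul_monomialSpan_pow hs Set.inter_subset_left,
    ← monomialSpan_nsmul Set.inter_subset_left]
  refine le_antisymm (monomialSpan_mono (succ_nsmul_subset_singleton_add hℓ hℓa hs1))
    (monomialSpan_mono ?_)
  rw [succ_nsmul, add_comm]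
  exact Set.add_subset_add subset_rfl (Set.singleton_subset_iff.2 ⟨hs, Set.mem_Ici.2 le_rfl⟩)

section ReductionNumber

variable {R : Type*} [CommRing R] {Q I : Ideal R} {x : R}

lemma inf_pow_succ_ne_mul_pow (hxI : x ∈ I) {r : ℕ} (hxQ : x ^ (r + 1) ∈ Q)
    (hx : x ^ (r + 1) ∉ Q * I ^ r) : Q ⊓ I ^ (r + 1) ≠ Q * I ^ r :=
  fun h => hx (h ▸ ⟨hxQ, Ideal.pow_mem_pow hxI _⟩)

lemma sInf_pow_succ_eq_mul_pow (hxI : x ∈ I) {r : ℕ} (hx : ∀ n < r, x ^ (n + 1) ∉ Q * I ^ n)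
    (hr : I ^ (r + 1) = Q * I ^ r) : sInf {n | I ^ (n + 1) = Q * I ^ n} = r :=
  le_antisymm (Nat.sInf_le hr) <| le_csInf ⟨r, hr⟩ fun n hn =>
    not_lt.1 fun hlt => hx n hlt (hn ▸ Ideal.pow_mem_pow hxI _)

end ReductionNumber

/-- Theorem 3.8: for `q = a-1`, `s = aℓ + (ℓ-1)` with `ℓ ≥ 2`, `a ≥ ℓ+3`:
`(t^{aℓ+ℓ})^{a-ℓ} ∈ Q` but `∉ QI^{a-ℓ-1}`, hence `Q ∩ I^{a-ℓ} ≠ QI^{a-ℓ-1}`, `G(I)` is not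
Cohen-Macaulay, and `r_Q(I) = a - ℓ`. -/
theorem stmt18 (k : Type) [Field k] (a : ℕ)
    (H : AddSubmonoid ℕ) (hH : H = AddSubmonoid.closure {a, a + 1})
    (haH : a ∈ H) (ha1H : a + 1 ∈ H)
    (ℓ : ℕ) (hℓ2 : 2 ≤ ℓ) (haℓ : ℓ + 3 ≤ a)
    (s : ℕ) (hsval : s = a * ℓ + (ℓ - 1)) (hs : s ∈ H) (hm : a * ℓ + ℓ ∈ H)
    (𝔪 : Ideal (ssr k H)) (h𝔪 : 𝔪 = Ideal.span {tp k H a haH, tp k H (a + 1) ha1H})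
    (Q : Ideal (ssr k H)) (hQ : Q = Ideal.span {tp k H s hs})
    (I : Ideal (ssr k H)) (hI : I = Submodule.colon Q ((𝔪 ^ (a - 1) : Ideal (ssr k H)) : Set (ssr k H))) :
    tp k H (a * ℓ + ℓ) hm ^ (a - ℓ) ∈ Q ∧
    tp k H (a * ℓ + ℓ) hm ^ (a - ℓ) ∉ Q * I ^ (a - ℓ - 1) ∧
    Q ⊓ I ^ (a - ℓ) ≠ Q * I ^ (a - ℓ - 1) ∧
    ¬ (∀ n : ℕ, Q ⊓ I ^ (n + 1) = Q * I ^ n) ∧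
    sInf {n : ℕ | I ^ (n + 1) = Q * I ^ n} = a - ℓ := by
  subst hH
  have hs1 : s + 1 = a * ℓ + ℓ := by omega
  obtain ⟨r, hr⟩ : ∃ r, a - ℓ = r + 1 := ⟨a - ℓ - 1, by omega⟩
  set E : Set ℕ := ↑(consecutiveSemigroup a) ∩ Set.Ici s
  have hE : E ⊆ consecutiveSemigroup a := Set.inter_subset_left
  have hI' : I = monomialSpan k _ E := by
    have : a * (ℓ + 1) ≤ a * (a - 1) := Nat.mul_le_mul_left a (by omega)
    rw [hI, h𝔪, hQ, colon_eq_monomialSpan (by omega) (by rw [mul_add_one] at this; omega) haH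
      ha1H hs]
  have hQI (n : ℕ) : Q * I ^ n = monomialSpan k _ ({s} + n • E) := by
    rw [hQ, hI', span_tp_mul_monomialSpan_pow hs hE]
  set x := tp k _ (a * ℓ + ℓ) hm
  have hxI : x ∈ I := hI' ▸ tp_mem_monomialSpan hm ⟨hm, Set.mem_Ici.2 (by omega)⟩
  have hxQI (n : ℕ) (hn : n ≤ r) : x ^ (n + 1) ∉ Q * I ^ n := fun h => by
    rw [hQI, tp_pow] at h
    exact notMem_singleton_add_nsmul_add (by omega) hs1 (by omega) (hs1 ▸ mem_add_of_tp_mem h)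
  have hxQ : x ^ (r + 1) ∈ Q := by
    have := add_mul_pred_le hℓ2 haℓ hs1
    rw [hQ, tp_pow, ← hr]
    exact tp_mem_span_tp hs _ (consecutiveSemigroup.mem_of_le (n := (a - ℓ) * (a * ℓ + ℓ) - s)
      (by rw [← hs1]; omega)) (by rw [← hs1]; omega)
  have hred : I ^ (r + 1 + 1) = Q * I ^ (r + 1) := by
    rw [hI', hQ, ← hr]
    exact monomialSpan_pow_succ_eq (by omega) (by omega) hs1 hs
  have hne := inf_pow_succ_ne_mul_pow hxI hxQ (hxQI r le_rfl)
  rw [hr, Nat.add_sub_cancel]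
  exact ⟨hxQ, hxQI r le_rfl, hne, fun h => hne (h r),
    sInf_pow_succ_eq_mul_pow hxI (fun n hn => hxQI n (by omega)) hred⟩
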